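/- For every positive integer n, the maximum size of a sum-free set A ⊆ {1,...,n} with 2n+1 ∉ ∑A is exactly ⌊(n+1)/3⌋. -/

import Mathlib

/-!
The upper bound is a packing argument in `[1, 2n]`. Put `B = A ∪ (A + A)`: since `A` is sum-free
the union is disjoint, and Cauchy–Davenport gives `|A + A| ≥ 2|A| - 1`, so `|B| ≥ 3|A| - 1`. Two
elements of `B` add up to a sum of at most four elements of `A`, hence never to `2n + 1`; thus `B`
and its reflection `2n + 1 - B` are disjoint subsets of `[1, 2n]`, so `2(3|A| - 1) ≤ 2n`.
The top interval `[n - q + 1, n]` with `q = ⌊(n + 1)/3⌋` attains the bound: sums of one or two of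
its elements are at most `2n`, sums of three or more are at least `2n + 2`.
-/

open Finset Pointwise

lemma AddSubmonoid.mem_closure_iff_exists_fin_sum {M : Type*} [AddCommMonoid M] {s : Set M}
    {x : M} :
    x ∈ closure s ↔ ∃ (k : ℕ) (f : Fin k → M), (∀ i, f i ∈ s) ∧ ∑ i, f i = x := by
  constructor
  · intro hx
    obtain ⟨l, hl, rfl⟩ := exists_list_of_mem_closure hx
    exact ⟨l.length, fun i ↦ l[i.1], fun i ↦ hl _ (List.getElem_mem _), Fin.sum_univ_getElem l⟩
  · rintro ⟨k, f, hf, rfl⟩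
    exact AddSubmonoid.sum_mem _ fun i _ ↦ subset_closure (hf i)

lemma exists_mul_le_le_of_mem_addSubmonoidClosure_Icc {a b x : ℕ}
    (hx : x ∈ AddSubmonoid.closure (Set.Icc a b)) : ∃ k, k * a ≤ x ∧ x ≤ k * b := by
  induction hx using AddSubmonoid.closure_induction with
  | mem x hx => exact ⟨1, by simpa using hx⟩
  | zero => exact ⟨0, by simp⟩
  | add x y _ _ hx hy =>
    obtain ⟨k, hkx⟩ := hx
    obtain ⟨l, hly⟩ := hy
    exact ⟨k + l, by constructor <;> nlinarith⟩

lemma notMem_addSubmonoidClosure_Icc {a b N : ℕ} (h2 : 2 * b < N) (h3 : N < 3 * a) :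
    N ∉ AddSubmonoid.closure (Set.Icc a b) := by
  intro hN
  obtain ⟨k, hka, hkb⟩ := exists_mul_le_le_of_mem_addSubmonoidClosure_Icc hN
  rcases le_or_gt k 2 with hk | hk
  · have := Nat.mul_le_mul_right b hk
    omega
  · have := Nat.mul_le_mul_right a hk
    omega

lemma two_mul_card_le_of_add_ne {B : Finset ℕ} {N : ℕ} (hB : B ⊆ Icc 1 N)
    (hsum : ∀ x ∈ B, ∀ y ∈ B, x + y ≠ N + 1) : 2 * #B ≤ N := by
  have hbound : ∀ x ∈ B, 1 ≤ x ∧ x ≤ N := fun x hx ↦ mem_Icc.1 (hB hx)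
  set R := B.image (N + 1 - ·)
  have hR : #R = #B := card_image_of_injOn fun x hx y hy h ↦ by
    have := hbound x hx
    have := hbound y hy
    omega
  have hdisj : Disjoint B R := disjoint_left.2 fun x hx hxR ↦ by
    obtain ⟨y, hy, rfl⟩ := mem_image.1 hxR
    have := hbound y hy
    exact hsum _ hx _ hy (by omega)
  have hsub : B ∪ R ⊆ Icc 1 N := union_subset hB fun x hxR ↦ by
    obtain ⟨y, hy, rfl⟩ := mem_image.1 hxR
    have := hbound y hy
    exact mem_Icc.2 (by omega)
  calc 2 * #B = #(B ∪ R) := by rw [card_union_of_disjoint hdisj, hR]; ring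
    _ ≤ #(Icc 1 N) := card_le_card hsub
    _ = N := by simp

theorem three_mul_card_le_of_sumFree {A : Finset ℕ} {n : ℕ} (hA : A ⊆ Icc 1 n)
    (hfree : Disjoint A (A + A)) (hN : 2 * n + 1 ∉ AddSubmonoid.closure (A : Set ℕ)) :
    3 * #A ≤ n + 1 := by
  rcases A.eq_empty_or_nonempty with rfl | hne
  · simp
  have hbound : ∀ x ∈ A, 1 ≤ x ∧ x ≤ n := fun x hx ↦ mem_Icc.1 (hA hx)
  set B := A ∪ (A + A)
  have hBcl : ∀ x ∈ B, x ∈ AddSubmonoid.closure (A : Set ℕ) := by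
    intro x hx
    rcases mem_union.1 hx with hx | hx
    · exact AddSubmonoid.subset_closure hx
    · obtain ⟨y, hy, z, hz, rfl⟩ := mem_add.1 hx
      exact add_mem (AddSubmonoid.subset_closure hy) (AddSubmonoid.subset_closure hz)
  have hBsub : B ⊆ Icc 1 (2 * n) := union_subset (hA.trans (Icc_subset_Icc le_rfl (by omega)))
    fun x hx ↦ by
      obtain ⟨y, hy, z, hz, rfl⟩ := mem_add.1 hx
      have := hbound y hy
      have := hbound z hz
      exact mem_Icc.2 (by omega)
  have hB : 2 * #B ≤ 2 * n := two_mul_card_le_of_add_ne hBsub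
    fun x hx y hy h ↦ hN (h ▸ add_mem (hBcl x hx) (hBcl y hy))
  have hsumset : #A + #A - 1 ≤ #(A + A) := cauchy_davenport_add_of_linearOrder_isCancelAdd hne hne
  have hcard : #B = #A + #(A + A) := card_union_of_disjoint hfree
  omega

theorem max_size_sumfree_forbidden_general (n : ℕ) :
    IsGreatest {m : ℕ | ∃ A : Finset ℕ, A ⊆ Finset.Icc 1 n ∧
      (∀ x ∈ A, ∀ y ∈ A, x + y ∉ A) ∧
      (∀ (k : ℕ) (f : Fin k → ℕ), (∀ i, f i ∈ A) → ∑ i, f i ≠ 2 * n + 1) ∧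
      A.card = m} ((n + 1) / 3) := by
  have hforbidden (A : Finset ℕ) :
      (∀ (k : ℕ) (f : Fin k → ℕ), (∀ i, f i ∈ A) → ∑ i, f i ≠ 2 * n + 1) ↔
        2 * n + 1 ∉ AddSubmonoid.closure (A : Set ℕ) := by
    simp [AddSubmonoid.mem_closure_iff_exists_fin_sum]
  constructor
  · refine ⟨Icc (n - (n + 1) / 3 + 1) n, Icc_subset_Icc (by omega) le_rfl, ?_, ?_, by simp; omega⟩
    · intro x hx y hy hxy
      simp only [mem_Icc] at hx hy hxy
      omega
    · rw [hforbidden, coe_Icc]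
      exact notMem_addSubmonoidClosure_Icc (by omega) (by omega)
  · rintro m ⟨A, hA, hfree, hforb, rfl⟩
    have hdisj : Disjoint A (A + A) := disjoint_left.2 fun x hx hxAA ↦ by
      obtain ⟨y, hy, z, hz, rfl⟩ := mem_add.1 hxAA
      exact hfree y hy z hz hx
    have := three_mul_card_le_of_sumFree hA hdisj ((hforbidden A).1 hforb)
    omega

theorem max_size_sumfree_forbidden (n : ℕ) (hn : 0 < n) :
    IsGreatest {m : ℕ | ∃ A : Finset ℕ, A ⊆ Finset.Icc 1 n ∧
      (∀ x ∈ A, ∀ y ∈ A, x + y ∉ A) ∧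
      (∀ (k : ℕ) (f : Fin k → ℕ), (∀ i, f i ∈ A) → ∑ i, f i ≠ 2 * n + 1) ∧
      A.card = m} ((n + 1) / 3) :=
  max_size_sumfree_forbidden_general n
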